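/- arXiv:2404.10931 — 5 statements merged into one kernel-verified Lean document; each statement's English description precedes it below -/
import Mathlib

section
/- Let Ω = ℝⁿ with n ≥ 2 (or the positive orthant), and let g : Ω → ℝⁿ. Suppose g satisfies the condition: for all x, y ∈ Ω, g(x)·y ≤ g(x)·x implies g(y)·x ≥ g(y)·y. Then g also satisfies: for all x, y ∈ Ω, g(x)·y < g(x)·x implies g(y)·x > g(y)·y. Conversely, if g is continuous and satisfies the second (strict) condition and Ω is such that for every x and a > 1 sufficiently close to 1, ax ∈ Ω (e.g., Ω is the positive orthant), then g satisfies the first condition. -/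
open Finset

/-- the weak weak axiom implies its strict version, and conversely
for a continuous `g` on the positive orthant. -/
theorem weakWeakAxiom_iff_strict_version
    {n : ℕ} (hn : 2 ≤ n) (g : (Fin n → ℝ) → (Fin n → ℝ))
    (Ω : Set (Fin n → ℝ)) (hΩ : Ω = {x | ∀ i, 0 < x i})
    (hgc : ContinuousOn g Ω)
    (hgrange : ∀ x ∈ Ω, (∀ i, 0 ≤ g x i) ∧ g x ≠ 0) :
    ((∀ x ∈ Ω, ∀ y ∈ Ω,
        (∑ i, g x i * y i) ≤ (∑ i, g x i * x i) →
        (∑ i, g y i * y i) ≤ (∑ i, g y i * x i)) →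
      (∀ x ∈ Ω, ∀ y ∈ Ω,
        (∑ i, g x i * y i) < (∑ i, g x i * x i) →
        (∑ i, g y i * y i) < (∑ i, g y i * x i))) ∧
    ((∀ x ∈ Ω, ∀ y ∈ Ω,
        (∑ i, g x i * y i) < (∑ i, g x i * x i) →
        (∑ i, g y i * y i) < (∑ i, g y i * x i)) →
      (∀ x ∈ Ω, ∀ y ∈ Ω,
        (∑ i, g x i * y i) ≤ (∑ i, g x i * x i) →
        (∑ i, g y i * y i) ≤ (∑ i, g y i * x i))) := by
  constructor
  · -- weak ⇒ strict (no continuity needed)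
    intro hw x hx y hy hlt
    have h1 := hw x hx y hy hlt.le
    rcases lt_or_eq_of_le h1 with h | h
    · exact h
    · exfalso
      have h2 := hw y hy x hx h.symm.le
      exact absurd h2 (not_le.mpr hlt)
  · -- strict ⇒ weak, using continuity
    intro hs x hx y hy hle
    have hxpos : ∀ i, 0 < x i := by rw [hΩ] at hx; exact hx
    have hypos : ∀ i, 0 < y i := by rw [hΩ] at hy; exact hy
    have hxx : 0 < ∑ i, g x i * x i := by
      obtain ⟨hpos, hne⟩ := hgrange x hx
      obtain ⟨i, hi⟩ := Function.ne_iff.mp hne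
      refine Finset.sum_pos' (fun j _ => mul_nonneg (hpos j) (hxpos j).le)
        ⟨i, Finset.mem_univ i, mul_pos (lt_of_le_of_ne (hpos i) (Ne.symm hi)) (hxpos i)⟩
    rcases lt_or_eq_of_le hle with h | h
    · exact (hs x hx y hy h).le
    · -- equality case: approximate y by a • y, a < 1
      have key : ∀ a ∈ Set.Ioo (0:ℝ) 1,
          ∑ i, g (a • y) i * (a • y) i < ∑ i, g (a • y) i * x i := by
        intro a ha
        have hay : (a • y) ∈ Ω := by
          rw [hΩ]; exact fun i => mul_pos ha.1 (hypos i)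
        apply hs x hx (a • y) hay
        have h2 : ∑ i, g x i * (a • y) i = a * ∑ i, g x i * y i := by
          rw [Finset.mul_sum]
          refine Finset.sum_congr rfl fun i _ => ?_
          simp [Pi.smul_apply, smul_eq_mul]; ring
        rw [h2, h]
        nlinarith [ha.2, hxx]
      -- limit a → 1⁻
      have hmap : Filter.Tendsto (fun a : ℝ => a • y)
          (nhdsWithin 1 (Set.Ioo 0 1)) (nhdsWithin y Ω) := by
        rw [tendsto_nhdsWithin_iff]
        constructor
        · have hc : ContinuousAt (fun a : ℝ => a • y) 1 :=
            (continuous_id.smul continuous_const).continuousAt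
          have h3 : Filter.Tendsto (fun a : ℝ => a • y)
              (nhdsWithin 1 (Set.Ioo 0 1)) (nhds ((1:ℝ) • y)) :=
            hc.tendsto.mono_left nhdsWithin_le_nhds
          simpa using h3
        · filter_upwards [self_mem_nhdsWithin] with a ha
          rw [hΩ]; exact fun i => mul_pos ha.1 (hypos i)
      have hgt : Filter.Tendsto (fun a : ℝ => g (a • y))
          (nhdsWithin 1 (Set.Ioo 0 1)) (nhds (g y)) :=
        (hgc y hy).tendsto.comp hmap
      have hF : Filter.Tendsto
          (fun a : ℝ => (∑ i, g (a • y) i * x i) - ∑ i, g (a • y) i * (a • y) i)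
          (nhdsWithin 1 (Set.Ioo 0 1))
          (nhds ((∑ i, g y i * x i) - ∑ i, g y i * y i)) := by
        apply Filter.Tendsto.sub
        · apply tendsto_finset_sum
          intro i _
          exact (((continuous_apply i).tendsto (g y)).comp hgt).mul tendsto_const_nhds
        · apply tendsto_finset_sum
          intro i _
          have h1 : Filter.Tendsto (fun a : ℝ => g (a • y) i)
              (nhdsWithin 1 (Set.Ioo 0 1)) (nhds (g y i)) :=
            ((continuous_apply i).tendsto (g y)).comp hgt
          have h2 : Filter.Tendsto (fun a : ℝ => (a • y) i)
              (nhdsWithin 1 (Set.Ioo 0 1)) (nhds (y i)) := by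
            have : Continuous (fun a : ℝ => a * y i) := continuous_id.mul continuous_const
            have h4 : Filter.Tendsto (fun a : ℝ => a * y i)
                (nhdsWithin 1 (Set.Ioo 0 1)) (nhds (1 * y i)) :=
              (this.tendsto 1).mono_left nhdsWithin_le_nhds
            simpa [Pi.smul_apply, smul_eq_mul] using h4
          exact h1.mul h2
      have hne : (nhdsWithin (1:ℝ) (Set.Ioo 0 1)).NeBot := by
        apply mem_closure_iff_nhdsWithin_neBot.mp
        rw [closure_Ioo (by norm_num : (0:ℝ) ≠ 1)]
        exact ⟨by norm_num, le_refl 1⟩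
      have hge : 0 ≤ (∑ i, g y i * x i) - ∑ i, g y i * y i := by
        refine ge_of_tendsto hF ?_
        filter_upwards [self_mem_nhdsWithin] with a ha
        linarith [key a ha]
      linarith
end

section
/- Let Ω = ℝⁿ₊₊ and u : Ω → ℝ a utility function such that the demand relation f^u is nonempty exactly where appropriate, and suppose g : Ω → ℝⁿ₊ \ {0} satisfies f^g = f^u where f^g(p,m) = {x ∈ Ω : p·x = m, ∃λ > 0, g(x) = λp}, and u is increasing (x ≫ y implies u(x) > u(y)). Then g satisfies the weak weak axiom: g(x)·y ≤ g(x)·x implies g(y)·x ≥ g(y)·y. -/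
open Finset Set

/-- if `f^g = f^u` for an increasing utility `u`, then `g`
satisfies the weak weak axiom. -/
theorem weakWeakAxiom_of_demand_eq_utility_demand
    {n : ℕ} (hn : 2 ≤ n)
    (Ω : Set (Fin n → ℝ)) (hΩ : Ω = {x | ∀ i, 0 < x i})
    (u : (Fin n → ℝ) → ℝ) (g : (Fin n → ℝ) → (Fin n → ℝ))
    (hgrange : ∀ x ∈ Ω, (∀ i, 0 ≤ g x i) ∧ g x ≠ 0)
    -- u is increasing: x ≫ y implies u(x) > u(y)
    (huinc : ∀ x ∈ Ω, ∀ y ∈ Ω, (∀ i, y i < x i) → u y < u x)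
    -- f^g = f^u on all budgets (p ∈ ℝⁿ₊ \ {0}, m > 0)
    (hdemand : ∀ (p : Fin n → ℝ) (m : ℝ), (∀ i, 0 ≤ p i) → p ≠ 0 → 0 < m →
      {x | x ∈ Ω ∧ (∑ i, p i * x i) = m ∧ ∃ lam : ℝ, 0 < lam ∧ g x = lam • p}
        = {x | (x ∈ Ω ∧ (∑ i, p i * x i) ≤ m) ∧
            ∀ y, (y ∈ Ω ∧ (∑ i, p i * y i) ≤ m) → u y ≤ u x}) :
    ∀ x ∈ Ω, ∀ y ∈ Ω,
      (∑ i, g x i * y i) ≤ (∑ i, g x i * x i) →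
      (∑ i, g y i * y i) ≤ (∑ i, g y i * x i) := by
  intro x hx y hy hxy
  -- key: every z ∈ Ω maximizes u on its own budget set
  have key : ∀ z ∈ Ω, ∀ w ∈ Ω, (∑ i, g z i * w i) ≤ (∑ i, g z i * z i) → u w ≤ u z := by
    intro z hz w hw hb
    obtain ⟨hgz, hgz0⟩ := hgrange z hz
    have hzpos : ∀ i, 0 < z i := by rw [hΩ] at hz; exact hz
    have hm : 0 < ∑ i, g z i * z i := by
      obtain ⟨i, hi⟩ := Function.ne_iff.mp hgz0
      have hi' : 0 < g z i := lt_of_le_of_ne (hgz i) (Ne.symm hi)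
      exact Finset.sum_pos' (fun j _ => mul_nonneg (hgz j) (hzpos j).le)
        ⟨i, Finset.mem_univ i, mul_pos hi' (hzpos i)⟩
    have heq := hdemand (g z) (∑ i, g z i * z i) hgz hgz0 hm
    have hzmem : z ∈ {x | x ∈ Ω ∧ (∑ i, g z i * x i) = (∑ i, g z i * z i) ∧
        ∃ lam : ℝ, 0 < lam ∧ g x = lam • g z} :=
      ⟨hz, rfl, 1, one_pos, (one_smul ℝ (g z)).symm⟩
    rw [heq] at hzmem
    exact hzmem.2 w ⟨hw, hb⟩
  have h1 : u y ≤ u x := key x hx y hy hxy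
  by_contra hcon
  push_neg at hcon
  obtain ⟨hgy, _⟩ := hgrange y hy
  have hxpos : ∀ i, 0 < x i := by rw [hΩ] at hx; exact hx
  set q := g y with hq
  set ε : ℝ := ((∑ i, q i * y i) - (∑ i, q i * x i)) / ((∑ i, q i) + 1) with hε
  have hsq : 0 ≤ ∑ i, q i := Finset.sum_nonneg (fun i _ => hgy i)
  have hεpos : 0 < ε := div_pos (by linarith) (by linarith)
  set x' : Fin n → ℝ := fun i => x i + ε with hx'
  have hx'Ω : x' ∈ Ω := by
    rw [hΩ]; intro i; exact add_pos (hxpos i) hεpos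
  have hbud : (∑ i, q i * x' i) ≤ (∑ i, q i * y i) := by
    have : (∑ i, q i * x' i) = (∑ i, q i * x i) + ε * (∑ i, q i) := by
      rw [Finset.mul_sum]
      rw [← Finset.sum_add_distrib]
      congr 1; funext i; ring
    rw [this]
    have h2 : ε * (∑ i, q i) ≤ ε * ((∑ i, q i) + 1) := by nlinarith
    have h3 : ε * ((∑ i, q i) + 1) = (∑ i, q i * y i) - (∑ i, q i * x i) := by
      rw [hε]; field_simp
    linarith
  have h4 : u x' ≤ u y := key y hy x' hx'Ω hbud
  have h5 : u x < u x' := huinc x' hx'Ω x hx (fun i => by simp [hx', hεpos])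
  linarith
end

section
/- Let g : Ω → ℝⁿ₊ \ {0} satisfy the weak axiom: for all x, y ∈ Ω, if g(x)·y ≤ g(x)·x and y ≠ x, then g(y)·x > g(y)·y. Then for every price-income pair (p,m), the set f^g(p,m) = {x ∈ Ω : p·x = m and ∃λ > 0, g(x) = λp} contains at most one element. -/
open Finset

/-- under the weak axiom, `f^g(p,m)` has at most one element. -/
theorem demand_subsingleton_of_weakAxiom
    {n : ℕ} (hn : 2 ≤ n)
    (Ω : Set (Fin n → ℝ)) (hΩ : Ω = {x | ∀ i, 0 < x i})
    (g : (Fin n → ℝ) → (Fin n → ℝ))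
    (hgrange : ∀ x ∈ Ω, (∀ i, 0 ≤ g x i) ∧ g x ≠ 0)
    (hwa : ∀ x ∈ Ω, ∀ y ∈ Ω,
      (∑ i, g x i * y i) ≤ (∑ i, g x i * x i) → y ≠ x →
      (∑ i, g y i * y i) < (∑ i, g y i * x i)) :
    ∀ (p : Fin n → ℝ) (m : ℝ), (∀ i, 0 ≤ p i) → p ≠ 0 → 0 < m →
      {x | x ∈ Ω ∧ (∑ i, p i * x i) = m ∧
        ∃ lam : ℝ, 0 < lam ∧ g x = lam • p}.Subsingleton := by
  intro p m _ _ _ x hx y hy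
  obtain ⟨hxΩ, hxm, l1, hl1, hgx⟩ := hx
  obtain ⟨hyΩ, hym, l2, hl2, hgy⟩ := hy
  by_contra hne
  have h1 : (∑ i, g x i * y i) = l1 * m := by
    rw [hgx]; simp only [Pi.smul_apply, smul_eq_mul]
    rw [← hym, mul_sum]; exact Finset.sum_congr rfl fun i _ => mul_assoc _ _ _
  have h2 : (∑ i, g x i * x i) = l1 * m := by
    rw [hgx]; simp only [Pi.smul_apply, smul_eq_mul]
    rw [← hxm, mul_sum]; exact Finset.sum_congr rfl fun i _ => mul_assoc _ _ _
  have h3 : (∑ i, g y i * y i) = l2 * m := by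
    rw [hgy]; simp only [Pi.smul_apply, smul_eq_mul]
    rw [← hym, mul_sum]; exact Finset.sum_congr rfl fun i _ => mul_assoc _ _ _
  have h4 : (∑ i, g y i * x i) = l2 * m := by
    rw [hgy]; simp only [Pi.smul_apply, smul_eq_mul]
    rw [← hxm, mul_sum]; exact Finset.sum_congr rfl fun i _ => mul_assoc _ _ _
  have := hwa x hxΩ y hyΩ (by rw [h1, h2]) (fun h => hne (h ▸ rfl))
  rw [h3, h4] at this
  exact lt_irrefl _ this
end

section
/- Let Ω ⊆ ℝⁿ be open and g : Ω → ℝⁿ be differentiable at x with gₙ ≡ 1 near x. Define the Antonelli matrix A(x) = (a_{ij}(x))_{i,j=1}^{n−1} with a_{ij}(x) = ∂gᵢ/∂x_j(x) − (∂gᵢ/∂xₙ(x))·g_j(x). Then for any v = (ṽ, vₙ) ∈ ℝⁿ with v·g(x) = 0, one has vᵀ(Dg(x))v = ṽᵀ A(x) ṽ. Consequently: A(x) is negative semi-definite iff vᵀDg(x)v ≤ 0 for all v with v·g(x) = 0, and A(x) is negative definite iff vᵀDg(x)v < 0 for all nonzero such v. -/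
open Finset

/-- for `g` normalized by `gₙ ≡ 1`, the quadratic form of the
Jacobian on the orthogonal complement of `g(x)` coincides with the quadratic
form of the Antonelli matrix; hence negative (semi-)definiteness of the
Antonelli matrix is equivalent to that of the restricted Jacobian form. -/
theorem antonelli_quadratic_form
    {m : ℕ} (hm : 1 ≤ m) (Ω : Set (Fin (m + 1) → ℝ)) (hΩopen : IsOpen Ω)
    (g : (Fin (m + 1) → ℝ) → (Fin (m + 1) → ℝ))
    (x : Fin (m + 1) → ℝ) (hx : x ∈ Ω)
    (Dg : (Fin (m + 1) → ℝ) →L[ℝ] (Fin (m + 1) → ℝ))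
    (hDg : HasFDerivAt g Dg x)
    (hnorm : ∀ᶠ y in nhds x, g y (Fin.last m) = 1)
    (A : Matrix (Fin m) (Fin m) ℝ)
    (hA : ∀ i j : Fin m,
      A i j = Dg (Pi.single j.castSucc 1) i.castSucc
        - Dg (Pi.single (Fin.last m) 1) i.castSucc * g x j.castSucc) :
    (∀ v : Fin (m + 1) → ℝ, (∑ i, v i * g x i) = 0 →
      (∑ i, v i * Dg v i)
        = ∑ i : Fin m, ∑ j : Fin m, v i.castSucc * A i j * v j.castSucc) ∧
    ((∀ w : Fin m → ℝ, (∑ i, ∑ j, w i * A i j * w j) ≤ 0) ↔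
      (∀ v : Fin (m + 1) → ℝ, (∑ i, v i * g x i) = 0 →
        (∑ i, v i * Dg v i) ≤ 0)) ∧
    ((∀ w : Fin m → ℝ, w ≠ 0 → (∑ i, ∑ j, w i * A i j * w j) < 0) ↔
      (∀ v : Fin (m + 1) → ℝ, v ≠ 0 → (∑ i, v i * g x i) = 0 →
        (∑ i, v i * Dg v i) < 0)) := by
  have hgx : g x (Fin.last m) = 1 := hnorm.self_of_nhds
  -- derivative of the last coordinate vanishes
  have hker : ∀ v : Fin (m + 1) → ℝ, Dg v (Fin.last m) = 0 := by
    intro v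
    have h1 : HasFDerivAt (fun y => g y (Fin.last m))
        ((ContinuousLinearMap.proj (Fin.last m)).comp Dg) x :=
      hasFDerivAt_pi'.mp hDg (Fin.last m)
    have h2 : HasFDerivAt (fun y => g y (Fin.last m))
        (0 : (Fin (m + 1) → ℝ) →L[ℝ] ℝ) x :=
      (hasFDerivAt_const (1 : ℝ) x).congr_of_eventuallyEq
        (hnorm.mono fun y hy => hy)
    have h3 := h1.unique h2
    exact DFunLike.congr_fun h3 v
  have hDgv : ∀ (u : Fin (m + 1) → ℝ) (i : Fin (m + 1)),
      Dg u i = ∑ j, u j * Dg (Pi.single j 1) i := by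
    intro u i
    have hu : u = ∑ j, u j • (Pi.single j 1 : Fin (m + 1) → ℝ) := by
      funext k
      simp [Pi.single_apply, Finset.sum_apply]
    conv_lhs => rw [hu]
    rw [map_sum]
    simp [Finset.sum_apply]
  -- the key identity
  have key : ∀ v : Fin (m + 1) → ℝ, (∑ i, v i * g x i) = 0 →
      (∑ i, v i * Dg v i)
        = ∑ i : Fin m, ∑ j : Fin m, v i.castSucc * A i j * v j.castSucc := by
    intro v hv
    have hvlast : v (Fin.last m)
        = -∑ j : Fin m, v j.castSucc * g x j.castSucc := by
      rw [Fin.sum_univ_castSucc, hgx, mul_one] at hv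
      linarith
    rw [Fin.sum_univ_castSucc, hker v, mul_zero, add_zero]
    refine Finset.sum_congr rfl fun i _ => ?_
    rw [hDgv v i.castSucc, Fin.sum_univ_castSucc, hvlast]
    rw [mul_add, Finset.mul_sum, neg_mul, mul_neg, Finset.sum_mul,
      Finset.mul_sum, ← sub_eq_add_neg, ← Finset.sum_sub_distrib]
    exact Finset.sum_congr rfl fun j _ => by rw [hA]; ring
  -- extension of a vector in ℝ^m to ℝ^{m+1} orthogonal to g x
  have ext : ∀ w : Fin m → ℝ,
      ∃ v : Fin (m + 1) → ℝ, (∀ i : Fin m, v i.castSucc = w i) ∧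
        (∑ i, v i * g x i) = 0 ∧ (w ≠ 0 → v ≠ 0) := by
    intro w
    refine ⟨Fin.snoc w (-∑ j : Fin m, w j * g x j.castSucc),
      fun i => Fin.snoc_castSucc .., ?_, ?_⟩
    · rw [Fin.sum_univ_castSucc, Fin.snoc_last, hgx, mul_one]
      simp [Fin.snoc_castSucc]
    · intro hw hv
      apply hw
      funext i
      have := congrFun hv i.castSucc
      simpa [Fin.snoc_castSucc] using this
  refine ⟨key, ⟨?_, ?_⟩, ?_, ?_⟩
  · intro h v hv
    rw [key v hv]
    exact h fun i => v i.castSucc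
  · intro h w
    obtain ⟨v, hvw, hv0, -⟩ := ext w
    have := h v hv0
    rw [key v hv0] at this
    simpa [hvw] using this
  · intro h v hvne hv
    rw [key v hv]
    apply h
    intro hw
    apply hvne
    funext i
    refine Fin.lastCases ?_ ?_ i
    · have hvlast : v (Fin.last m)
          = -∑ j : Fin m, v j.castSucc * g x j.castSucc := by
        rw [Fin.sum_univ_castSucc, hgx, mul_one] at hv
        linarith
      rw [hvlast]
      simp only [Pi.zero_apply]
      rw [neg_eq_zero]
      refine Finset.sum_eq_zero fun j _ => ?_
      have := congrFun hw j
      simp only [Pi.zero_apply] at this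
      rw [this, zero_mul]
    · intro j
      have := congrFun hw j
      simpa using this
  · intro h w hw
    obtain ⟨v, hvw, hv0, hvne⟩ := ext w
    have := h v (hvne hw) hv0
    rw [key v hv0] at this
    simpa [hvw] using this
end

section
/- Let g : Ω → ℝⁿ be differentiable at x ∈ Ω with gₙ(x) ≠ 0, and suppose that for all i, j ∈ {1,...,n−1} the identity gᵢ(∂g_j/∂xₙ − ∂gₙ/∂x_j) + g_j(∂gₙ/∂xᵢ − ∂gᵢ/∂xₙ) + gₙ(∂gᵢ/∂x_j − ∂g_j/∂xᵢ) = 0 holds at x. Then for all triples i, j, k ∈ {1,...,n}, the identity gᵢ(∂g_j/∂x_k − ∂g_k/∂x_j) + g_j(∂g_k/∂xᵢ − ∂gᵢ/∂x_k) + g_k(∂gᵢ/∂x_j − ∂g_j/∂xᵢ) = 0 holds at x. -/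
open Finset

/-- if the integrability identity holds at `x` for all pairs
`i, j ∈ {1,…,n−1}` together with the last index, and `gₙ(x) ≠ 0`, then
condition (B) holds at `x` for all triples of indices. -/
theorem conditionB_of_pairs_with_last
    {m : ℕ} (hm : 2 ≤ m) (Ω : Set (Fin (m + 1) → ℝ)) (hΩopen : IsOpen Ω)
    (g : (Fin (m + 1) → ℝ) → (Fin (m + 1) → ℝ))
    (x : Fin (m + 1) → ℝ) (hx : x ∈ Ω)
    (Dg : (Fin (m + 1) → ℝ) →L[ℝ] (Fin (m + 1) → ℝ))
    (hDg : HasFDerivAt g Dg x)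
    (hgn : g x (Fin.last m) ≠ 0)
    (hpairs : ∀ i j : Fin m,
      g x i.castSucc * (Dg (Pi.single (Fin.last m) 1) j.castSucc
          - Dg (Pi.single j.castSucc 1) (Fin.last m))
      + g x j.castSucc * (Dg (Pi.single i.castSucc 1) (Fin.last m)
          - Dg (Pi.single (Fin.last m) 1) i.castSucc)
      + g x (Fin.last m) * (Dg (Pi.single j.castSucc 1) i.castSucc
          - Dg (Pi.single i.castSucc 1) j.castSucc) = 0) :
    ∀ i j k : Fin (m + 1),
      g x i * (Dg (Pi.single k 1) j - Dg (Pi.single j 1) k)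
      + g x j * (Dg (Pi.single i 1) k - Dg (Pi.single k 1) i)
      + g x k * (Dg (Pi.single j 1) i - Dg (Pi.single i 1) j) = 0 := by
  have hall : ∀ a b : Fin (m + 1),
      g x a * (Dg (Pi.single (Fin.last m) 1) b - Dg (Pi.single b 1) (Fin.last m))
      + g x b * (Dg (Pi.single a 1) (Fin.last m) - Dg (Pi.single (Fin.last m) 1) a)
      + g x (Fin.last m) * (Dg (Pi.single b 1) a - Dg (Pi.single a 1) b) = 0 := by
    intro a b
    induction a using Fin.lastCases with
    | last =>
      induction b using Fin.lastCases with
      | last => ring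
      | cast b => ring
    | cast a =>
      induction b using Fin.lastCases with
      | last => ring
      | cast b => exact hpairs a b
  intro i j k
  have h1 := hall i j
  have h2 := hall j k
  have h3 := hall k i
  have key : g x (Fin.last m) *
      (g x i * (Dg (Pi.single k 1) j - Dg (Pi.single j 1) k)
      + g x j * (Dg (Pi.single i 1) k - Dg (Pi.single k 1) i)
      + g x k * (Dg (Pi.single j 1) i - Dg (Pi.single i 1) j)) = 0 := by
    linear_combination g x k * h1 + g x i * h2 + g x j * h3
  rcases mul_eq_zero.1 key with h | h
  · exact absurd h hgn
  · exact h
end
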